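/- (Theorem 1, first part: ∂(∂y/∂x)_{(i,j)}/∂H_l = (P_l^j S_l^i)ᵀ.) Let x be a generic input point of the ReLU MLP with weights (H_1, …, H_L), fix a hidden layer index l with 2 ≤ l ≤ L−1 and indices i, j, and let F be the real-valued function on n_l × n_{l-1} real matrices sending H to the (i, j) entry of the Jacobian at x of the ReLU MLP obtained by replacing the l-th weight matrix by H (other weights fixed). Then F is Fréchet differentiable at H_l, its derivative is the linear map K ↦ S_l^i ⬝ᵥ (K *ᵥ P_l^j), and its partial derivative with respect to the matrix entry (H_l)_{ab} equals (S_l^i)_a · (P_l^j)_b; equivalently, the gradient matrix of F at H_l is the transpose of the outer product P_l^j S_l^i. -/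

import Mathlib

noncomputable section

/-- Componentwise ReLU. -/
def relu {m : ℕ} (v : Fin m → ℝ) : Fin m → ℝ := fun i => max (v i) 0

/-- Pre-activations of the ReLU MLP: `preact n H x l` is the paper's `a_{l+1}`,
i.e. `a_1 = H_1 x` is `preact n H x 0`, and `a_{l+1} = H_{l+1} g(a_l)`. -/
def preact (n : ℕ → ℕ) (H : (l : ℕ) → Matrix (Fin (n (l + 1))) (Fin (n l)) ℝ)
    (x : Fin (n 0) → ℝ) : (l : ℕ) → Fin (n (l + 1)) → ℝ
  | 0 => (H 0).mulVec x
  | l + 1 => (H (l + 1)).mulVec (relu (preact n H x l))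

/-- Activation-pattern matrix: `Gmat n H x l` is the paper's `G_{l+2}`, the diagonal
matrix recording the sign pattern of the pre-activation `preact n H x l`. -/
def Gmat (n : ℕ → ℕ) (H : (l : ℕ) → Matrix (Fin (n (l + 1))) (Fin (n l)) ℝ)
    (x : Fin (n 0) → ℝ) (l : ℕ) : Matrix (Fin (n (l + 1))) (Fin (n (l + 1))) ℝ :=
  Matrix.diagonal fun i => if 0 < preact n H x l i then (1 : ℝ) else 0

/-- The alternating matrix product `jacProd n H x l = H_{l+1} G_{l+1} H_l ⋯ G_2 H_1`. -/
def jacProd (n : ℕ → ℕ) (H : (l : ℕ) → Matrix (Fin (n (l + 1))) (Fin (n l)) ℝ)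
    (x : Fin (n 0) → ℝ) : (l : ℕ) → Matrix (Fin (n (l + 1))) (Fin (n 0)) ℝ
  | 0 => H 0
  | l + 1 => H (l + 1) * Gmat n H x l * jacProd n H x l

end

noncomputable section

/-- The tail matrix product `H_L G_L H_{L-1} ⋯ H_{l+1} G_{l+1}` of the paper, for a
network with `L = s + c + 3` layers and `l = s + 2`:
`tailProd n H x s c = (H (s+c+2) * Gmat (s+c+1)) * ⋯ * (H (s+2) * Gmat (s+1))`. -/
def tailProd (n : ℕ → ℕ) (H : (l : ℕ) → Matrix (Fin (n (l + 1))) (Fin (n l)) ℝ)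
    (x : Fin (n 0) → ℝ) (s : ℕ) :
    (c : ℕ) → Matrix (Fin (n (s + c + 3))) (Fin (n (s + 2))) ℝ
  | 0 => H (s + 2) * Gmat n H x (s + 1)
  | c + 1 => H (s + c + 3) * Gmat n H x (s + c + 2) * tailProd n H x s c

end

open Matrix

attribute [local instance] Matrix.normedAddCommGroup Matrix.normedSpace

/-- The linear map `K ↦ S ⬝ᵥ (K *ᵥ P)` on matrices, as a continuous linear map. -/
noncomputable def bilinEntryDeriv {a b : ℕ} (S : Fin a → ℝ) (P : Fin b → ℝ) :
    Matrix (Fin a) (Fin b) ℝ →L[ℝ] ℝ :=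
  LinearMap.toContinuousLinearMap
    { toFun := fun K => S ⬝ᵥ K.mulVec P
      map_add' := by
        intro K₁ K₂
        simp [Matrix.add_mulVec, dotProduct_add]
      map_smul' := by
        intro r K
        simp [Matrix.smul_mulVec, dotProduct_smul] }

/-!
Since the network has no biases and `x` is generic, the activation pattern at `x` is stable
under small changes of the weights, and for a fixed pattern the network is linear in `x` with
Jacobian the alternating product `H_L G_L ⋯ G_2 H_1`. Hence, for `K` near `H_l`, the Jacobian
of the network with `l`-th weight `K` is `T K G_l H_{l-1} ⋯ G_2 H_1`, where
`T = H_L G_L ⋯ H_{l+1} G_{l+1}` does not depend on `K`. Its `(i, j)` entry is therefore the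
linear function `K ↦ S_l^i ⬝ᵥ (K *ᵥ P_l^j)` on a neighbourhood of `H_l`.
-/

open Filter Topology Function

lemma ContinuousAt.eventually_ne_zero_and_pos_iff {X : Type*} [TopologicalSpace X]
    {f : X → ℝ} {a : X} (hf : ContinuousAt f a) (ha : f a ≠ 0) :
    ∀ᶠ y in 𝓝 a, f y ≠ 0 ∧ (0 < f y ↔ 0 < f a) := by
  rcases ha.lt_or_gt with h | h
  · filter_upwards [hf.eventually (gt_mem_nhds h)] with y hy
    exact ⟨hy.ne, by simp [hy.not_gt, h.not_gt]⟩
  · filter_upwards [hf.eventually (lt_mem_nhds h)] with y hy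
    exact ⟨hy.ne', by simp [hy, h]⟩

lemma continuous_relu {m : ℕ} : Continuous (relu : (Fin m → ℝ) → Fin m → ℝ) :=
  continuous_pi fun i => (continuous_apply i).max continuous_const

lemma relu_eventuallyEq_diagonal_mulVec {m : ℕ} {v : Fin m → ℝ} (hv : ∀ i, v i ≠ 0) :
    relu =ᶠ[𝓝 v] fun w => diagonal (fun i => if 0 < v i then (1 : ℝ) else 0) *ᵥ w := by
  have hsign : ∀ᶠ w in 𝓝 v, ∀ i, 0 < w i ↔ 0 < v i :=
    eventually_all.2 fun i => .mono
      ((continuous_apply i).continuousAt.eventually_ne_zero_and_pos_iff (f := fun w => w i) (hv i))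
      fun _ h => h.2
  filter_upwards [hsign] with w hw
  funext i
  by_cases hi : 0 < v i
  · simp [relu, mulVec_diagonal, hi, ((hw i).2 hi).le]
  · simp [relu, mulVec_diagonal, hi, not_lt.1 (mt (hw i).1 hi)]

lemma hasFDerivAt_relu {m : ℕ} {v : Fin m → ℝ} (hv : ∀ i, v i ≠ 0) :
    HasFDerivAt relu
      (diagonal fun i => if 0 < v i then (1 : ℝ) else 0).mulVecLin.toContinuousLinearMap v :=
  (LinearMap.toContinuousLinearMap _).hasFDerivAt.congr_of_eventuallyEq
    (relu_eventuallyEq_diagonal_mulVec hv)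

section Network

variable {n : ℕ → ℕ} {H H' : (l : ℕ) → Matrix (Fin (n (l + 1))) (Fin (n l)) ℝ}
  {x : Fin (n 0) → ℝ}

lemma hasFDerivAt_preact (l : ℕ) (hx : ∀ k < l, ∀ i, preact n H x k i ≠ 0) :
    HasFDerivAt (fun u => preact n H u l) (jacProd n H x l).mulVecLin.toContinuousLinearMap x := by
  induction l with
  | zero => exact (H 0).mulVecLin.toContinuousLinearMap.hasFDerivAt
  | succ l ih =>
    have hlin := (H (l + 1)).mulVecLin.toContinuousLinearMap.hasFDerivAt.comp x
      ((hasFDerivAt_relu (hx l l.lt_succ_self)).comp x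
        (ih fun k hk => hx k (hk.trans l.lt_succ_self)))
    refine hlin.congr_fderiv ?_
    ext v k
    simp [jacProd, Gmat, mulVec_mulVec, Matrix.mul_assoc]

lemma continuous_preact (x : Fin (n 0) → ℝ) (l : ℕ) :
    Continuous fun H : (l : ℕ) → Matrix (Fin (n (l + 1))) (Fin (n l)) ℝ => preact n H x l := by
  induction l with
  | zero => exact (continuous_apply 0).matrix_mulVec continuous_const
  | succ l ih => exact (continuous_apply (l + 1)).matrix_mulVec (continuous_relu.comp ih)

lemma eventually_preact_ne_zero_and_pos_iff {N : ℕ}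
    (hx : ∀ k ≤ N, ∀ i, preact n H x k i ≠ 0) :
    ∀ᶠ H' in 𝓝 H, ∀ k ≤ N, ∀ i,
      preact n H' x k i ≠ 0 ∧ (0 < preact n H' x k i ↔ 0 < preact n H x k i) := by
  have h := (eventually_all_finite (Set.finite_Iic N)).2 fun k (hk : k ≤ N) =>
    eventually_all.2 fun i =>
      ((continuous_apply i).comp (continuous_preact x k)).continuousAt.eventually_ne_zero_and_pos_iff
        (hx k hk i)
  exact h.mono fun _ h k hk => h k hk

lemma Gmat_congr {l : ℕ} (h : ∀ i, 0 < preact n H' x l i ↔ 0 < preact n H x l i) :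
    Gmat n H' x l = Gmat n H x l := by
  simp only [Gmat, h]

lemma jacProd_congr {l : ℕ} (hH : ∀ k ≤ l, H' k = H k)
    (hG : ∀ k < l, Gmat n H' x k = Gmat n H x k) : jacProd n H' x l = jacProd n H x l := by
  induction l with
  | zero => exact hH 0 le_rfl
  | succ l ih =>
    simp only [jacProd, hH (l + 1) le_rfl, hG l l.lt_succ_self,
      ih (fun k hk => hH k (hk.trans l.le_succ)) (fun k hk => hG k (hk.trans l.lt_succ_self))]

lemma tailProd_congr {s c : ℕ} (hH : ∀ k, s + 2 ≤ k → k ≤ s + c + 2 → H' k = H k)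
    (hG : ∀ k, s + 1 ≤ k → k ≤ s + c + 1 → Gmat n H' x k = Gmat n H x k) :
    tailProd n H' x s c = tailProd n H x s c := by
  induction c with
  | zero => simp only [tailProd, hH (s + 2) le_rfl le_rfl, hG (s + 1) le_rfl le_rfl]
  | succ c ih =>
    simp only [tailProd, hH (s + c + 3) (by omega) le_rfl, hG (s + c + 2) (by omega) le_rfl,
      ih (fun k h₁ h₂ => hH k h₁ (by omega)) (fun k h₁ h₂ => hG k h₁ (by omega))]

lemma jacProd_eq_tailProd_mul (s c : ℕ) :
    jacProd n H x (s + c + 2) =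
      tailProd n H x s c * (H (s + 1) * Gmat n H x s * jacProd n H x s) := by
  induction c with
  | zero => rfl
  | succ c ih =>
    change jacProd n H x (s + c + 2 + 1) = _
    rw [jacProd, ih]
    exact (Matrix.mul_assoc _ _ _).symm

lemma jacProd_update_eq_tailProd_mul {s c : ℕ} {K : Matrix (Fin (n (s + 2))) (Fin (n (s + 1))) ℝ}
    (hG : ∀ k ≤ s + c + 1, Gmat n (update H (s + 1) K) x k = Gmat n H x k) :
    jacProd n (update H (s + 1) K) x (s + c + 2) =
      tailProd n H x s c * (K * Gmat n H x s * jacProd n H x s) := by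
  rw [jacProd_eq_tailProd_mul, update_self, hG s (by omega),
    tailProd_congr (fun k hk _ => update_of_ne (show k ≠ s + 1 by omega) _ _)
      (fun k _ hk => hG k hk),
    jacProd_congr (fun k hk => update_of_ne (show k ≠ s + 1 by omega) _ _)
      (fun k hk => hG k (by omega))]

lemma fderiv_preact_update_apply_eventuallyEq {s c : ℕ}
    (hx : ∀ l ≤ s + c + 1, ∀ i, preact n H x l i ≠ 0) (i : Fin (n (s + c + 3))) (j : Fin (n 0)) :
    (fun K : Matrix (Fin (n (s + 2))) (Fin (n (s + 1))) ℝ =>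
        fderiv ℝ (fun u => preact n (update H (s + 1) K) u (s + c + 2)) x (Pi.single j 1) i)
      =ᶠ[𝓝 (H (s + 1))]
        bilinEntryDeriv (fun a => tailProd n H x s c i a)
          ((Gmat n H x s).mulVec fun b => jacProd n H x s b j) := by
  have hupdate : Tendsto (update H (s + 1)) (𝓝 (H (s + 1))) (𝓝 H) := by
    simpa using (continuous_const.update (s + 1) continuous_id :
      Continuous (update H (s + 1))).tendsto (H (s + 1))
  filter_upwards [hupdate.eventually (eventually_preact_ne_zero_and_pos_iff hx)] with K hK
  rw [(hasFDerivAt_preact _ fun k hk i => (hK k (by omega) i).1).fderiv,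
    jacProd_update_eq_tailProd_mul fun k hk => Gmat_congr fun i => (hK k hk i).2,
    LinearMap.coe_toContinuousLinearMap', mulVecLin_apply, ← mulVec_mulVec, ← mulVec_mulVec,
    ← mulVec_mulVec, mulVec_single_one]
  rfl

end Network

lemma bilinEntryDeriv_single {a b : ℕ} (S : Fin a → ℝ) (P : Fin b → ℝ) (i : Fin a) (j : Fin b) :
    bilinEntryDeriv S P (single i j 1) = S i * P j := by
  change S ⬝ᵥ single i j 1 *ᵥ P = _
  rw [single_mulVec, one_mul]
  exact dotProduct_single S (P j) i

theorem mlp_jacobian_entry_weight_derivative_general (s c : ℕ) (n : ℕ → ℕ)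
    (H : (l : ℕ) → Matrix (Fin (n (l + 1))) (Fin (n l)) ℝ)
    (x : Fin (n 0) → ℝ)
    (hx : ∀ l ≤ s + c + 1, ∀ i, preact n H x l i ≠ 0)
    (i : Fin (n (s + c + 3))) (j : Fin (n 0)) :
    HasFDerivAt
        (fun K : Matrix (Fin (n (s + 2))) (Fin (n (s + 1))) ℝ =>
          fderiv ℝ
            (fun u : Fin (n 0) → ℝ =>
              preact n (Function.update H (s + 1) K) u (s + c + 2)) x
            (Pi.single j 1) i)
        (bilinEntryDeriv (fun a => tailProd n H x s c i a)
          ((Gmat n H x s).mulVec fun b => jacProd n H x s b j))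
        (H (s + 1)) ∧
      ∀ (a : Fin (n (s + 2))) (b : Fin (n (s + 1))),
        fderiv ℝ
            (fun K : Matrix (Fin (n (s + 2))) (Fin (n (s + 1))) ℝ =>
              fderiv ℝ
                (fun u : Fin (n 0) → ℝ =>
                  preact n (Function.update H (s + 1) K) u (s + c + 2)) x
                (Pi.single j 1) i)
            (H (s + 1)) (Matrix.single a b 1) =
          tailProd n H x s c i a *
            (Gmat n H x s).mulVec (fun b' => jacProd n H x s b' j) b := by
  have hF := (bilinEntryDeriv _ _).hasFDerivAt.congr_of_eventuallyEq
    (fderiv_preact_update_apply_eventuallyEq hx i j)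
  exact ⟨hF, fun a b => by rw [hF.fderiv, bilinEntryDeriv_single]⟩

/-- Theorem 1 of the paper, first part:
`∂(∂y/∂x)_{(i,j)}/∂H_l = (P_l^j S_l^i)ᵀ`.
Let `x` be a generic input of the ReLU MLP with `L = s + c + 3 ≥ 3` layers
`H 0, …, H (s+c+2)` (the paper's `H_1, …, H_L`), and consider the hidden layer with
paper index `l = s + 2` (so `2 ≤ l ≤ L - 1`), whose weight matrix is `H (s+1)`.
Let `F` send a matrix `K` to the `(i, j)` entry of the Jacobian at `x` of the MLP
obtained by replacing the `l`-th weight matrix by `K`. Then `F` is Fréchet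
differentiable at `H (s+1)` with derivative the linear map `K ↦ S_l^i ⬝ᵥ (K *ᵥ P_l^j)`,
and its partial derivative with respect to the entry `(a, b)` of the weight matrix is
`(S_l^i) a * (P_l^j) b` — i.e. the gradient matrix of `F` is `(P_l^j S_l^i)ᵀ`. -/
theorem mlp_jacobian_entry_weight_derivative (s c : ℕ) (n : ℕ → ℕ) (hn : ∀ l, 0 < n l)
    (H : (l : ℕ) → Matrix (Fin (n (l + 1))) (Fin (n l)) ℝ)
    (x : Fin (n 0) → ℝ)
    (hx : ∀ l ≤ s + c + 1, ∀ i, preact n H x l i ≠ 0)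
    (i : Fin (n (s + c + 3))) (j : Fin (n 0)) :
    HasFDerivAt
        (fun K : Matrix (Fin (n (s + 2))) (Fin (n (s + 1))) ℝ =>
          fderiv ℝ
            (fun u : Fin (n 0) → ℝ =>
              preact n (Function.update H (s + 1) K) u (s + c + 2)) x
            (Pi.single j 1) i)
        (bilinEntryDeriv (fun a => tailProd n H x s c i a)
          ((Gmat n H x s).mulVec fun b => jacProd n H x s b j))
        (H (s + 1)) ∧
      ∀ (a : Fin (n (s + 2))) (b : Fin (n (s + 1))),
        fderiv ℝ
            (fun K : Matrix (Fin (n (s + 2))) (Fin (n (s + 1))) ℝ =>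
              fderiv ℝ
                (fun u : Fin (n 0) → ℝ =>
                  preact n (Function.update H (s + 1) K) u (s + c + 2)) x
                (Pi.single j 1) i)
            (H (s + 1)) (Matrix.single a b 1) =
          tailProd n H x s c i a *
            (Gmat n H x s).mulVec (fun b' => jacProd n H x s b' j) b :=
  mlp_jacobian_entry_weight_derivative_general s c n H x hx i j
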